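/- arXiv:1709.03882 — 7 statements merged into one kernel-verified Lean document; each statement's English description precedes it below -/
import Mathlib

section
/- Let G be a finite simple graph with vertex set {x_1,...,x_n} admitting an ordered matching of size t, and let k ≥ 2t − 1 be an integer. Then the induced matching number of the graph G_k is at least t. More precisely, if {{x_i, x_{t+i}} : 1 ≤ i ≤ t} is an ordered matching of G with {x_1,...,x_t} independent and {x_i, x_{t+j}} ∈ E(G) implying i ≤ j, then the set of edges {{x_{i,t+1−i}, x_{t+i,k+i−t}} : 1 ≤ i ≤ t} is an induced matching of G_k. -/
/-!
Place the copy of `x_i` at level `t+1-i` and the copy of `x_{t+i}` at level `k+i-t`. A cross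
edge between copies of two `x_i` is excluded by independence, one between copies of two
`x_{t+j}` by the level bound `k ≥ 2t - 1`, and one from the copy of `x_i` to that of `x_{t+j}`
would need `i ≤ j` in `G` (the ordering) but `j < i` in the levels.
-/

/-- The graph `G_k`: its vertices are the pairs `x_{i,p}` with `1 ≤ i ≤ n` and
`1 ≤ p ≤ k` (encoded zero-based as `Fin n × Fin k`), and `x_{i,p}` is adjacent
to `x_{j,q}` iff `{x_i,x_j} ∈ E(G)` and `p + q ≤ k + 1` (for the one-based
values of `p` and `q`). -/
def graphPower {n : ℕ} (G : SimpleGraph (Fin n)) (k : ℕ) :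
    SimpleGraph (Fin n × Fin k) where
  Adj a b := G.Adj a.1 b.1 ∧ (a.2.val + 1) + (b.2.val + 1) ≤ k + 1
  symm := by
    constructor
    intro a b hab
    exact ⟨hab.1.symm, by omega⟩
  loopless := by
    constructor
    intro a ha
    exact G.loopless.irrefl a.1 ha.1

/-- `a b : Fin t → V` describe an induced matching of `H` of size `t`: the
edges `{a i, b i}` are pairwise disjoint edges of `H`, and there is no edge of
`H` joining vertices of two distinct edges of the matching. -/
def IsInducedMatching {V : Type*} (H : SimpleGraph V) {t : ℕ} (a b : Fin t → V) : Prop :=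
  (∀ i, H.Adj (a i) (b i)) ∧
  (∀ i j, i ≠ j → ({a i, b i} : Set V) ∩ ({a j, b j} : Set V) = ∅) ∧
  (∀ i j, i ≠ j → ∀ u ∈ ({a i, b i} : Set V), ∀ v ∈ ({a j, b j} : Set V), ¬ H.Adj u v)

/-- The induced matching number of a graph: the maximum size of an induced
matching. -/
noncomputable def inducedMatchingNum {V : Type*} (H : SimpleGraph V) : ℕ :=
  sSup {t : ℕ | ∃ a b : Fin t → V, IsInducedMatching H a b}

namespace IsInducedMatching

variable {V : Type*} {H : SimpleGraph V} {t : ℕ} {a b : Fin t → V}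

/-- Disjointness of the edges is automatic: a vertex shared by edges `i ≠ j` would be
adjacent to its partner in edge `j`, which is a forbidden cross edge from edge `i`. -/
theorem of_adj_of_not_adj (hadj : ∀ i, H.Adj (a i) (b i))
    (hcross : ∀ i j, i ≠ j →
      ¬ H.Adj (a i) (a j) ∧ ¬ H.Adj (a i) (b j) ∧ ¬ H.Adj (b i) (b j)) :
    IsInducedMatching H a b := by
  have hno : ∀ i j, i ≠ j → ∀ u ∈ ({a i, b i} : Set V), ∀ v ∈ ({a j, b j} : Set V),
      ¬ H.Adj u v := by
    intro i j hij u hu v hv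
    obtain ⟨haa, hab, hbb⟩ := hcross i j hij
    obtain ⟨-, hba, -⟩ := hcross j i hij.symm
    rcases hu with rfl | rfl <;> rcases hv with rfl | rfl
    exacts [haa, hab, fun h => hba h.symm, hbb]
  refine ⟨hadj, fun i j hij => ?_, hno⟩
  refine Set.eq_empty_of_forall_notMem fun u ⟨hi, hj⟩ => ?_
  rcases hj with rfl | rfl
  · exact hno i j hij _ hi _ (Set.mem_insert_of_mem _ rfl) (hadj j)
  · exact hno i j hij _ hi _ (Set.mem_insert _ _) (hadj j).symm

theorem injective_left (h : IsInducedMatching H a b) : Function.Injective a := by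
  intro i j hij
  by_contra hne
  have hmem : a i ∈ ({a i, b i} : Set V) ∩ {a j, b j} :=
    ⟨Set.mem_insert _ _, hij ▸ Set.mem_insert _ _⟩
  rwa [h.2.1 i j hne] at hmem

theorem le_inducedMatchingNum [Finite V] (h : IsInducedMatching H a b) :
    t ≤ inducedMatchingNum H := by
  have hbdd : BddAbove {s : ℕ | ∃ a b : Fin s → V, IsInducedMatching H a b} := by
    refine ⟨Nat.card V, ?_⟩
    rintro s ⟨a, b, hs⟩
    simpa using Nat.card_le_card_of_injective a hs.injective_left
  exact le_csSup hbdd ⟨a, b, h⟩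

end IsInducedMatching

theorem graphPower_adj {n k : ℕ} {G : SimpleGraph (Fin n)} {u v : Fin n × Fin k} :
    (graphPower G k).Adj u v ↔ G.Adj u.1 v.1 ∧ u.2.val + v.2.val + 1 ≤ k :=
  and_congr_right' (by omega)

/-- Indices are zero-based: the paper's vertex `x_{i,p}` is `(⟨i-1,_⟩, ⟨p-1,_⟩)`. -/
theorem inducedMatching_of_orderedMatching (n t k : ℕ) (G : SimpleGraph (Fin n))
    (h2t : 2 * t ≤ n) (hk : 2 * t ≤ k + 1)
    (hmatch : ∀ i : Fin t,
      G.Adj ⟨i.val, by omega⟩ ⟨t + i.val, by omega⟩)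
    (hindep : ∀ i j : Fin t,
      ¬ G.Adj ⟨i.val, by omega⟩ ⟨j.val, by omega⟩)
    (horder : ∀ i j : Fin t,
      G.Adj ⟨i.val, by omega⟩ ⟨t + j.val, by omega⟩ → i ≤ j) :
    IsInducedMatching (graphPower G k)
      (fun i : Fin t =>
        (⟨⟨i.val, by omega⟩, ⟨t - 1 - i.val, by omega⟩⟩ : Fin n × Fin k))
      (fun i : Fin t =>
        (⟨⟨t + i.val, by omega⟩, ⟨k - t + i.val, by omega⟩⟩ : Fin n × Fin k)) ∧
    t ≤ inducedMatchingNum (graphPower G k) := by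
  refine (and_iff_left_of_imp IsInducedMatching.le_inducedMatchingNum).2 ?_
  refine .of_adj_of_not_adj (fun i => graphPower_adj.2 ⟨hmatch i, by simp only; omega⟩)
    fun i j hij => ⟨fun h => hindep i j (graphPower_adj.1 h).1, fun h => ?_, fun h => ?_⟩
  · obtain ⟨hG, hlevel⟩ := graphPower_adj.1 h
    have hle : i ≤ j := horder i j hG
    simp only at hlevel
    omega
  · have hlevel := (graphPower_adj.1 h).2
    simp only at hlevel
    omega
end

section
/- Let I be a monomial ideal of S = K[x_1,...,x_n], let S' = K[x_1,...,x_{j−1},x_{j+1},...,x_n] be the polynomial ring obtained from S by deleting the variable x_j, and set I' = I ∩ S'. Then sreg(I') ≤ sreg(I). -/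
open MvPolynomial

/-- The `k`-th symbolic power of the cover ideal of a graph `G`:
`J(G)^(k) = ⋂_{{x,y} ∈ E(G)} (x,y)^k`. -/
noncomputable def coverIdealSymbPow (K : Type*) [Field K] {V : Type*}
    (G : SimpleGraph V) (k : ℕ) : Ideal (MvPolynomial V K) :=
  ⨅ e : {p : V × V // G.Adj p.1 p.2}, (Ideal.span {X e.val.1, X e.val.2}) ^ k

/-- The "Stanley set" of monomials `u·K[Z]`, recorded by exponent vectors:
all exponent vectors of the form `u + w` with `w` supported in `Z`. -/
def stanleyPiece {σ : Type*} (u : σ →₀ ℕ) (Z : Finset σ) : Set (σ →₀ ℕ) :=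
  {v | u ≤ v ∧ ∀ i ∉ Z, v i = u i}

/-- A Stanley decomposition of a set of monomials (recorded by their exponent
vectors): a partition into finitely many Stanley sets `u_i·K[Z_i]`. -/
structure StanleyDecomp {σ : Type*} (A : Set (σ →₀ ℕ)) where
  m : ℕ
  u : Fin m → (σ →₀ ℕ)
  Z : Fin m → Finset σ
  cover : A = ⋃ i, stanleyPiece (u i) (Z i)
  disj : ∀ i j, i ≠ j → Disjoint (stanleyPiece (u i) (Z i)) (stanleyPiece (u j) (Z j))

/-- Stanley depth of a set of monomials: the maximum over all Stanley
decompositions of the minimum `|Z_i|` (with value `⊤` on the empty set,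
corresponding to the convention `sdepth 0 = ∞`). -/
noncomputable def sdepthSet {σ : Type*} (A : Set (σ →₀ ℕ)) : ℕ∞ :=
  ⨆ D : StanleyDecomp A, ⨅ i, ((D.Z i).card : ℕ∞)

/-- The set of (exponent vectors of) monomials belonging to an ideal. -/
def monomialSet {σ K : Type*} [CommSemiring K] (I : Ideal (MvPolynomial σ K)) :
    Set (σ →₀ ℕ) :=
  {v | MvPolynomial.monomial v (1 : K) ∈ I}

/-- Stanley depth of a monomial ideal `I ⊆ S = K[x_1,…,x_n]`. -/
noncomputable def sdepthIdeal {σ K : Type*} [CommSemiring K]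
    (I : Ideal (MvPolynomial σ K)) : ℕ∞ :=
  sdepthSet (monomialSet I)

/-- Stanley depth of the quotient `S/I` of the polynomial ring by a monomial ideal. -/
noncomputable def sdepthQuot {σ K : Type*} [CommSemiring K]
    (I : Ideal (MvPolynomial σ K)) : ℕ∞ :=
  sdepthSet (monomialSet I)ᶜ

/-- Stanley regularity of a set of monomials: the minimum over all Stanley
decompositions of the maximum degree `deg u_i`. -/
noncomputable def sregSet {σ : Type*} (A : Set (σ →₀ ℕ)) : ℕ∞ :=
  ⨅ D : StanleyDecomp A, ⨆ i, ((D.u i).sum (fun _ e => e) : ℕ∞)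

/-- An ideal of the polynomial ring is a monomial ideal if it is generated by monomials. -/
def Ideal.IsMonomialIdeal {σ K : Type*} [CommSemiring K]
    (I : Ideal (MvPolynomial σ K)) : Prop :=
  ∃ A : Set (σ →₀ ℕ), I = Ideal.span ((fun v => MvPolynomial.monomial v (1 : K)) '' A)

/-- The inclusion `S' = K[x_i : i ≠ j] → S = K[x_1,…,x_n]` of the polynomial
ring obtained by deleting the variable `x_j`. -/
noncomputable def varDeletionHom (K : Type*) [Field K] {n : ℕ} (j : Fin n) :
    MvPolynomial {i : Fin n // i ≠ j} K →ₐ[K] MvPolynomial (Fin n) K :=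
  MvPolynomial.rename Subtype.val

/-- `I ∩ S'`: the restriction of an ideal `I ⊆ S` to the polynomial subring
`S'` obtained by deleting the variable `x_j`, realized as the preimage of `I`
under the inclusion `S' → S`. -/
noncomputable def restrictIdeal (K : Type*) [Field K] {n : ℕ} (j : Fin n)
    (I : Ideal (MvPolynomial (Fin n) K)) : Ideal (MvPolynomial {i : Fin n // i ≠ j} K) :=
  Ideal.comap (varDeletionHom K j) I

section Aux

variable {K : Type*} [Field K] {n : ℕ}

/-- Membership in the monomial set of the restricted ideal, via `mapDomain`. -/
lemma mem_monomialSet_restrict (j : Fin n) (I : Ideal (MvPolynomial (Fin n) K))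
    (v : {i : Fin n // i ≠ j} →₀ ℕ) :
    v ∈ monomialSet (restrictIdeal K j I) ↔
      Finsupp.mapDomain Subtype.val v ∈ monomialSet I := by
  simp [monomialSet, restrictIdeal, varDeletionHom, Ideal.mem_comap,
    MvPolynomial.rename_monomial]

lemma mapDomain_val_apply_ne (j : Fin n) (v : {i : Fin n // i ≠ j} →₀ ℕ)
    (x : {i : Fin n // i ≠ j}) :
    Finsupp.mapDomain (Subtype.val : {i : Fin n // i ≠ j} → Fin n) v x.val = v x :=
  Finsupp.mapDomain_apply Subtype.val_injective v x

lemma mapDomain_val_apply_j (j : Fin n) (v : {i : Fin n // i ≠ j} →₀ ℕ) :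
    Finsupp.mapDomain (Subtype.val : {i : Fin n // i ≠ j} → Fin n) v j = 0 :=
  Finsupp.mapDomain_notin_range v j (fun ⟨x, hx⟩ => x.2 hx)

/-- If `u j = 0` and `v` lies in the restricted Stanley piece, then the
extension of `v` lies in the original Stanley piece. -/
lemma mapDomain_mem_piece (j : Fin n) (u : Fin n →₀ ℕ) (Z : Finset (Fin n))
    (hu : u j = 0) (v : {i : Fin n // i ≠ j} →₀ ℕ)
    (hv : v ∈ stanleyPiece (u.subtypeDomain (· ≠ j)) (Z.subtype (· ≠ j))) :
    Finsupp.mapDomain Subtype.val v ∈ stanleyPiece u Z := by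
  obtain ⟨h1, h2⟩ := hv
  constructor
  · intro x
    by_cases hx : x = j
    · subst hx; simp [hu]
    · have := h1 ⟨x, hx⟩
      simpa [Finsupp.subtypeDomain_apply, mapDomain_val_apply_ne j v ⟨x, hx⟩] using this
  · intro x hx
    by_cases hxj : x = j
    · subst hxj; rw [mapDomain_val_apply_j, hu]
    · have hmem : (⟨x, hxj⟩ : {i : Fin n // i ≠ j}) ∉ Z.subtype (· ≠ j) := by
        simp [Finset.mem_subtype, hx]
      have := h2 _ hmem
      rw [Finsupp.subtypeDomain_apply] at this
      rw [mapDomain_val_apply_ne j v ⟨x, hxj⟩] at *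
      exact this

end Aux

set_option maxHeartbeats 2000000 in
/-- Let `I` be a monomial ideal of `S = K[x_1,…,x_n]`, let
`S'` be the polynomial ring obtained from `S` by deleting the variable `x_j`,
and let `I' = I ∩ S'`. Then `sreg(I') ≤ sreg(I)`. -/
theorem sreg_restrict_le (K : Type*) [Field K] (n : ℕ) (j : Fin n)
    (I : Ideal (MvPolynomial (Fin n) K)) (hI : I.IsMonomialIdeal) :
    sregSet (monomialSet (restrictIdeal K j I)) ≤ sregSet (monomialSet I) := by
  classical
  refine le_iInf fun D => ?_
  set good : Finset (Fin D.m) := Finset.univ.filter (fun i => D.u i j = 0) with hgood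
  let f : Fin good.card → Fin D.m := fun k => (good.equivFin.symm k : Fin D.m)
  have hf0 : ∀ k, D.u (f k) j = 0 := fun k =>
    (Finset.mem_filter.1 (good.equivFin.symm k).2).2
  have hfinj : Function.Injective f :=
    Subtype.val_injective.comp good.equivFin.symm.injective
  let u' : Fin good.card → ({i : Fin n // i ≠ j} →₀ ℕ) :=
    fun k => (D.u (f k)).subtypeDomain (· ≠ j)
  let Z' : Fin good.card → Finset {i : Fin n // i ≠ j} :=
    fun k => (D.Z (f k)).subtype (· ≠ j)
  have key : ∀ k (v : {i : Fin n // i ≠ j} →₀ ℕ),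
      v ∈ stanleyPiece (u' k) (Z' k) →
      Finsupp.mapDomain Subtype.val v ∈ stanleyPiece (D.u (f k)) (D.Z (f k)) :=
    fun k v hv => mapDomain_mem_piece j _ _ (hf0 k) v hv
  have hcover : monomialSet (restrictIdeal K j I) = ⋃ k, stanleyPiece (u' k) (Z' k) := by
    ext v
    rw [mem_monomialSet_restrict]
    constructor
    · intro hv
      rw [D.cover] at hv
      obtain ⟨i, hi⟩ := Set.mem_iUnion.1 hv
      obtain ⟨h1, h2⟩ := hi
      have hij : D.u i j = 0 := by
        have h1j := h1 j
        have := mapDomain_val_apply_j j v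
        omega
      have higood : i ∈ good := by simp [hgood, hij]
      refine Set.mem_iUnion.2 ⟨good.equivFin ⟨i, higood⟩, ?_⟩
      have hfk : f (good.equivFin ⟨i, higood⟩) = i := by
        simp [f]
      constructor
      · intro x
        have := h1 x.val
        simp only [u', hfk, Finsupp.subtypeDomain_apply]
        rwa [mapDomain_val_apply_ne j v x] at this
      · intro x hx
        have hxZ : x.val ∉ D.Z i := by
          simp only [Z', hfk, Finset.mem_subtype] at hx
          intro hmem; exact hx hmem
        have := h2 x.val hxZ
        simp only [u', hfk, Finsupp.subtypeDomain_apply]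
        rwa [mapDomain_val_apply_ne j v x] at this
    · intro hv
      obtain ⟨k, hk⟩ := Set.mem_iUnion.1 hv
      have := key k v hk
      rw [D.cover]
      exact Set.mem_iUnion.2 ⟨f k, this⟩
  have hdisj : ∀ k l, k ≠ l →
      Disjoint (stanleyPiece (u' k) (Z' k)) (stanleyPiece (u' l) (Z' l)) := by
    intro k l hkl
    rw [Set.disjoint_left]
    intro v hvk hvl
    exact Set.disjoint_left.1 (D.disj (f k) (f l) (fun h => hkl (hfinj h)))
      (key k v hvk) (key l v hvl)
  let D' : StanleyDecomp (monomialSet (restrictIdeal K j I)) :=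
    ⟨good.card, u', Z', hcover, hdisj⟩
  refine le_trans (iInf_le _ D') ?_
  refine iSup_le fun k => ?_
  refine le_iSup_of_le (f k) ?_
  have hsum : (((D.u (f k)).subtypeDomain (· ≠ j)).sum (fun _ e => (e : ℕ∞)))
      = (D.u (f k)).sum (fun _ e => (e : ℕ∞)) := by
    refine Finsupp.sum_subtypeDomain_index (M := ℕ) (N := ℕ∞) (v := D.u (f k)) (h := fun _ e => (e : ℕ∞)) ?_
    intro x hx hxj
    exact Finsupp.mem_support_iff.1 hx (by rw [hxj]; exact hf0 k)
  exact le_of_eq hsum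
end

section
/- Let G be a finite simple graph on n vertices. Then for every integer k ≥ 1, sdepth(S/J(G)^(k)) ≥ sdepth(S/J(G)^(k+1)); that is, the sequence {sdepth(S/J(G)^(k))}_{k=1}^∞ is non-increasing. -/
open MvPolynomial

/-! ### Auxiliary material for the proof -/

section DegIdeal

/-- Auxiliary ideal: polynomials all of whose monomials have `i,j`-degree at least `t`. -/
def degIdeal {σ K : Type*} [CommSemiring K] [DecidableEq σ] (i j : σ) (t : ℕ) :
    Ideal (MvPolynomial σ K) where
  carrier := {p | ∀ w ∈ p.support, t ≤ w i + w j}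
  add_mem' := by
    intro p q hp hq w hw
    rcases Finset.mem_union.1 (Finsupp.support_add hw) with h | h
    exacts [hp w h, hq w h]
  zero_mem' := by simp
  smul_mem' := by
    intro c p hp w hw
    rw [smul_eq_mul] at hw
    obtain ⟨w1, hw1, w2, hw2, rfl⟩ := Finset.mem_add.1 (MvPolynomial.support_mul _ _ hw)
    have h2 := hp w2 hw2
    simp only [Finsupp.add_apply]
    omega

lemma span_pair_pow_le {σ K : Type*} [CommSemiring K] [Nontrivial K] [DecidableEq σ]
    {i j : σ} (hij : i ≠ j) (t : ℕ) :
    (Ideal.span {X i, X j} : Ideal (MvPolynomial σ K)) ^ t ≤ degIdeal i j t := by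
  have hbase : (Ideal.span {X i, X j} : Ideal (MvPolynomial σ K)) ≤ degIdeal i j 1 := by
    rw [Ideal.span_le]
    rintro x hx
    rcases hx with rfl | rfl
    · intro w hw
      rw [MvPolynomial.support_X] at hw
      rcases Finset.mem_singleton.1 hw with rfl
      simp [Finsupp.single_apply, hij]
    · intro w hw
      rw [MvPolynomial.support_X] at hw
      rcases Finset.mem_singleton.1 hw with rfl
      simp [Finsupp.single_apply, hij.symm, Ne.symm hij]
  induction t with
  | zero =>
    intro p _ w _
    exact Nat.zero_le _
  | succ t ih =>
    rw [pow_succ]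
    refine Ideal.mul_le.2 fun r hr s hs => ?_
    have hr' := ih hr
    have hs' := hbase hs
    intro w hw
    obtain ⟨w1, hw1, w2, hw2, rfl⟩ := Finset.mem_add.1 (MvPolynomial.support_mul _ _ hw)
    have h1 := hr' w1 hw1
    have h2 := hs' w2 hw2
    simp only [Finsupp.add_apply]
    omega

lemma monomial_mem_pair_pow {σ K : Type*} [Field K] [DecidableEq σ]
    {i j : σ} (hij : i ≠ j) (t : ℕ) (v : σ →₀ ℕ) :
    (monomial v (1 : K) ∈ (Ideal.span {X i, X j} : Ideal (MvPolynomial σ K)) ^ t)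
      ↔ t ≤ v i + v j := by
  classical
  constructor
  · intro h
    refine span_pair_pow_le hij t h v ?_
    rw [MvPolynomial.support_monomial]
    simp
  · intro h
    set a := min (v i) t with ha
    set b := t - a with hb
    have hav : a ≤ v i := min_le_left _ _
    have hbv : b ≤ v j := by omega
    have hs : Finsupp.single i a + Finsupp.single j b ≤ v := by
      rw [Finsupp.le_def]
      intro x
      rw [Finsupp.add_apply, Finsupp.single_apply, Finsupp.single_apply]
      rcases eq_or_ne i x with rfl | hix
      · rcases eq_or_ne j i with rfl | hjx
        · exact absurd rfl hij
        · simp [hjx]; omega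
      · rcases eq_or_ne j x with rfl | hjx
        · simp [hix]; omega
        · simp [hix, hjx]
    have key : monomial v (1 : K)
        = monomial (v - (Finsupp.single i a + Finsupp.single j b)) (1 : K)
            * (X i ^ a * X j ^ b) := by
      rw [X_pow_eq_monomial, X_pow_eq_monomial, monomial_mul, monomial_mul]
      rw [one_mul, one_mul, tsub_add_cancel_of_le hs]
    rw [key]
    apply Ideal.mul_mem_left
    have h1 : (X i : MvPolynomial σ K) ∈ Ideal.span {X i, X j} :=
      Ideal.subset_span (by simp)
    have h2 : (X j : MvPolynomial σ K) ∈ Ideal.span {X i, X j} :=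
      Ideal.subset_span (by simp)
    have hmul := Ideal.mul_mem_mul (Ideal.pow_mem_pow h1 a) (Ideal.pow_mem_pow h2 b)
    rw [← pow_add] at hmul
    have hab : a + b = t := by omega
    rwa [hab] at hmul

lemma mem_monomialSet_symbPow_iff {K : Type*} [Field K] {V : Type*} [DecidableEq V]
    (G : SimpleGraph V) (t : ℕ) (v : V →₀ ℕ) :
    v ∈ monomialSet (coverIdealSymbPow K G t)
      ↔ ∀ e : {p : V × V // G.Adj p.1 p.2}, t ≤ v e.val.1 + v e.val.2 := by
  unfold monomialSet coverIdealSymbPow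
  rw [Set.mem_setOf_eq, Submodule.mem_iInf]
  exact forall_congr' fun e => monomial_mem_pair_pow e.2.ne t v

end DegIdeal

section Transfer

variable {σ : Type*} {f g : ℕ → ℕ}

lemma fg_inverse (hf : StrictMono f) (hgal : ∀ v a : ℕ, a ≤ f v ↔ g a ≤ v)
    {y : ℕ} (hy : ∃ w, f w = y) : f (g y) = y := by
  obtain ⟨w, hw⟩ := hy
  have h1 : y ≤ f (g y) := (hgal (g y) y).2 le_rfl
  have h2 : g y ≤ w := (hgal w y).1 (le_of_eq hw.symm)
  have h3 := hf.monotone h2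
  omega

lemma preimage_stanleyPiece_of (hf : StrictMono f) (hf0 : f 0 = 0) (hg0 : g 0 = 0)
    (hgal : ∀ v a : ℕ, a ≤ f v ↔ g a ≤ v)
    (a : σ →₀ ℕ) (Z : Finset σ) (hval : ∀ i ∉ Z, ∃ w, f w = a i) :
    (Finsupp.mapRange f hf0 : (σ →₀ ℕ) → (σ →₀ ℕ)) ⁻¹' stanleyPiece a Z
      = stanleyPiece (Finsupp.mapRange g hg0 a) Z := by
  ext v
  simp only [Set.mem_preimage, stanleyPiece, Set.mem_setOf_eq, Finsupp.le_def,
    Finsupp.mapRange_apply]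
  constructor
  · rintro ⟨h1, h2⟩
    refine ⟨fun i => (hgal (v i) (a i)).1 (h1 i), fun i hi => ?_⟩
    have h3 := h2 i hi
    have h4 : f (g (a i)) = a i := fg_inverse hf hgal ⟨v i, h3⟩
    exact hf.injective (h3.trans h4.symm)
  · rintro ⟨h1, h2⟩
    refine ⟨fun i => (hgal (v i) (a i)).2 (h1 i), fun i hi => ?_⟩
    rw [h2 i hi]
    exact fg_inverse hf hgal (hval i hi)

lemma preimage_stanleyPiece_empty (hf0 : f 0 = 0)
    (a : σ →₀ ℕ) (Z : Finset σ) {i₀ : σ} (hi₀ : i₀ ∉ Z) (hbad : ∀ w, f w ≠ a i₀) :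
    (Finsupp.mapRange f hf0 : (σ →₀ ℕ) → (σ →₀ ℕ)) ⁻¹' stanleyPiece a Z = ∅ := by
  ext v
  simp only [Set.mem_preimage, stanleyPiece, Set.mem_setOf_eq, Set.mem_empty_iff_false,
    iff_false, not_and]
  intro _ h2
  exact hbad (v i₀) (h2 i₀ hi₀)

lemma sdepthSet_le_preimage (hf : StrictMono f) (hf0 : f 0 = 0) (hg0 : g 0 = 0)
    (hgal : ∀ v a : ℕ, a ≤ f v ↔ g a ≤ v) (A : Set (σ →₀ ℕ)) :
    sdepthSet A ≤ sdepthSet ((Finsupp.mapRange f hf0 : (σ →₀ ℕ) → (σ →₀ ℕ)) ⁻¹' A) := by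
  classical
  refine iSup_le fun D => ?_
  set P : Fin D.m → Prop := fun p => ∀ i ∉ D.Z p, ∃ w, f w = D.u p i with hP
  let T := {p : Fin D.m // P p}
  let e : Fin (Fintype.card T) ≃ T := (Fintype.equivFin T).symm
  have hcover : (Finsupp.mapRange f hf0 : (σ →₀ ℕ) → (σ →₀ ℕ)) ⁻¹' A
      = ⋃ q, stanleyPiece (Finsupp.mapRange g hg0 (D.u (e q).1)) (D.Z (e q).1) := by
    conv_lhs => rw [D.cover]
    rw [Set.preimage_iUnion]
    apply Set.Subset.antisymm
    · refine Set.iUnion_subset fun p => ?_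
      by_cases hp : P p
      · rw [preimage_stanleyPiece_of hf hf0 hg0 hgal _ _ hp]
        refine Set.subset_iUnion_of_subset (e.symm ⟨p, hp⟩) ?_
        have : e (e.symm ⟨p, hp⟩) = ⟨p, hp⟩ := e.apply_symm_apply _
        rw [this]
      · have : ∃ i₀, i₀ ∉ D.Z p ∧ ∀ w, f w ≠ D.u p i₀ := by
          have hp' : ¬ ∀ i ∉ D.Z p, ∃ w, f w = D.u p i := hp
          push_neg at hp'
          obtain ⟨i₀, hi₀, hbad⟩ := hp'
          exact ⟨i₀, hi₀, fun w hw => hbad w hw⟩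
        obtain ⟨i₀, hi₀, hbad⟩ := this
        rw [preimage_stanleyPiece_empty hf0 _ _ hi₀ hbad]
        exact Set.empty_subset _
    · refine Set.iUnion_subset fun q => ?_
      refine Set.subset_iUnion_of_subset ((e q).1) ?_
      rw [preimage_stanleyPiece_of hf hf0 hg0 hgal _ _ (e q).2]
  have hdisj : ∀ q q', q ≠ q' →
      Disjoint (stanleyPiece (Finsupp.mapRange g hg0 (D.u (e q).1)) (D.Z (e q).1))
        (stanleyPiece (Finsupp.mapRange g hg0 (D.u (e q').1)) (D.Z (e q').1)) := by
    intro q q' hne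
    rw [← preimage_stanleyPiece_of hf hf0 hg0 hgal _ _ (e q).2,
      ← preimage_stanleyPiece_of hf hf0 hg0 hgal _ _ (e q').2]
    refine Disjoint.preimage _ (D.disj _ _ ?_)
    intro hval
    exact hne (e.injective (Subtype.ext hval))
  refine le_trans ?_
    (le_iSup (fun D' : StanleyDecomp ((Finsupp.mapRange f hf0 : (σ →₀ ℕ) → (σ →₀ ℕ)) ⁻¹' A)
        => ⨅ i, ((D'.Z i).card : ℕ∞))
      ⟨Fintype.card T, fun q => Finsupp.mapRange g hg0 (D.u (e q).1), fun q => D.Z (e q).1,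
        hcover, hdisj⟩)
  exact le_iInf fun q => iInf_le _ ((e q).1)

end Transfer

/-- For a finite simple graph `G` on `n` vertices and every
integer `k ≥ 1`, `sdepth(S/J(G)^(k)) ≥ sdepth(S/J(G)^(k+1))`: the sequence of
Stanley depths of the quotients by symbolic powers of the cover ideal is
non-increasing. -/
theorem sdepth_quot_symbPow_antitone (K : Type*) [Field K] (n : ℕ)
    (G : SimpleGraph (Fin n)) (k : ℕ) (hk : 1 ≤ k) :
    sdepthQuot (coverIdealSymbPow K G (k + 1)) ≤
      sdepthQuot (coverIdealSymbPow K G k) := by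
  have hf0 : (fun x : ℕ => x + (if (k+1)/2 ≤ x then 1 else 0)) 0 = 0 := by
    have h : ¬ ((k+1)/2 ≤ 0) := by omega
    simp [h]
  have hg0 : (fun y : ℕ => y - (if (k+1)/2 < y then 1 else 0)) 0 = 0 := by simp
  have hf : StrictMono (fun x : ℕ => x + (if (k+1)/2 ≤ x then 1 else 0)) := by
    intro x y hxy
    dsimp only
    split_ifs <;> omega
  have hgal : ∀ v a : ℕ,
      a ≤ (fun x : ℕ => x + (if (k+1)/2 ≤ x then 1 else 0)) v
        ↔ (fun y : ℕ => y - (if (k+1)/2 < y then 1 else 0)) a ≤ v := by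
    intro v a
    dsimp only
    split_ifs <;> omega
  have hedge : ∀ x y : ℕ,
      (k + 1 ≤ (x + (if (k+1)/2 ≤ x then 1 else 0)) + (y + (if (k+1)/2 ≤ y then 1 else 0)))
        ↔ k ≤ x + y := by
    intro x y
    split_ifs <;> omega
  have hkey : (monomialSet (coverIdealSymbPow K G k))ᶜ
      = (Finsupp.mapRange (fun x : ℕ => x + (if (k+1)/2 ≤ x then 1 else 0)) hf0
          : (Fin n →₀ ℕ) → (Fin n →₀ ℕ))
        ⁻¹' (monomialSet (coverIdealSymbPow K G (k+1)))ᶜ := by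
    ext v
    simp only [Set.mem_compl_iff, Set.mem_preimage]
    rw [mem_monomialSet_symbPow_iff, mem_monomialSet_symbPow_iff, not_iff_not]
    exact forall_congr' fun e => by
      rw [Finsupp.mapRange_apply, Finsupp.mapRange_apply]
      exact (hedge _ _).symm
  unfold sdepthQuot
  rw [hkey]
  exact sdepthSet_le_preimage (f := fun x : ℕ => x + (if (k+1)/2 ≤ x then 1 else 0))
    (g := fun y : ℕ => y - (if (k+1)/2 < y then 1 else 0)) hf hf0 hg0 hgal _
end

section
/- Let G be a finite simple graph on n vertices. Then for every integer k ≥ 1, sdepth(J(G)^(k)) ≥ sdepth(J(G)^(k+1)); that is, the sequence {sdepth(J(G)^(k))}_{k=1}^∞ is non-increasing. -/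
/-!
Let `c = ⌈k/2⌉` and let `φ : ℕ → ℕ` skip the value `c` (identity below `c`, `s ↦ s + 1` from `c`
on). For every edge, `k ≤ s + t ↔ k + 1 ≤ φ s + φ t`, so the monomials of `J(G)^(k)` are exactly
the coordinatewise `φ`-preimages of those of `J(G)^(k+1)`. Since `φ` has a left adjoint, the
preimage of a Stanley space `u·K[Z]` is either empty or the Stanley space with the same `Z`, so
any Stanley decomposition of `J(G)^(k+1)` pulls back to one of `J(G)^(k)` of at least the same
Stanley depth.
-/

open MvPolynomial

namespace Nat

def succAbove (c s : ℕ) : ℕ := if s < c then s else s + 1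

def predAbove (c m : ℕ) : ℕ := if m ≤ c then m else m - 1

lemma succAbove_zero_of_pos {c : ℕ} (hc : 0 < c) : succAbove c 0 = 0 := if_pos hc

def predAboveSuccAboveGaloisInsertion (c : ℕ) : GaloisInsertion (predAbove c) (succAbove c) :=
  GaloisConnection.toGaloisInsertion
    (fun m s => by unfold predAbove succAbove; split_ifs <;> omega)
    (fun s => by unfold predAbove succAbove; split_ifs <;> omega)

lemma le_succAbove_add_succAbove_iff {c k : ℕ} (h₁ : 2 * c ≤ k + 1) (h₂ : k ≤ 2 * c)
    (s t : ℕ) : k + 1 ≤ succAbove c s + succAbove c t ↔ k ≤ s + t := by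
  unfold succAbove; split_ifs <;> omega

end Nat

section StanleyDecomposition

variable {σ : Type*}

lemma iInf_card_le_sdepthSet {ι : Type*} [Finite ι] {A : Set (σ →₀ ℕ)} (w : ι → σ →₀ ℕ)
    (Z : ι → Finset σ) (hcover : A = ⋃ i, stanleyPiece (w i) (Z i))
    (hdisj : Pairwise fun i j => Disjoint (stanleyPiece (w i) (Z i)) (stanleyPiece (w j) (Z j))) :
    ⨅ i, ((Z i).card : ℕ∞) ≤ sdepthSet A := by
  let e := (Finite.equivFin ι).symm
  let D : StanleyDecomp A :=
    { m := Nat.card ι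
      u := w ∘ e
      Z := Z ∘ e
      cover := hcover.trans (e.surjective.iUnion_comp fun i => stanleyPiece (w i) (Z i)).symm
      disj := fun i j hij => hdisj (e.injective.ne hij) }
  refine le_iSup_of_le D (le_of_eq ?_)
  exact (e.surjective.iInf_comp fun i => ((Z i).card : ℕ∞)).symm

variable {l u : ℕ → ℕ}

lemma preimage_mapRange_stanleyPiece (gi : GaloisInsertion l u) (hu : u 0 = 0)
    (w : σ →₀ ℕ) (Z : Finset σ) (hw : ∀ j ∉ Z, w j ∈ Set.range u) :
    Finsupp.mapRange u hu ⁻¹' stanleyPiece w Z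
      = stanleyPiece (Finsupp.mapRange l gi.gc.l_bot w) Z := by
  ext x
  simp only [stanleyPiece, Set.mem_preimage, Set.mem_ofPred_eq, Finsupp.le_def,
    Finsupp.mapRange_apply, ← gi.gc _ _]
  refine and_congr_right fun _ => forall₂_congr fun j hj => ?_
  obtain ⟨t, ht⟩ := hw j hj
  rw [← ht, gi.l_u_eq, gi.u_injective.eq_iff]

lemma preimage_mapRange_stanleyPiece_eq_empty (hu : u 0 = 0) (w : σ →₀ ℕ) (Z : Finset σ)
    (hw : ∃ j ∉ Z, w j ∉ Set.range u) :
    Finsupp.mapRange u hu ⁻¹' stanleyPiece w Z = ∅ := by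
  obtain ⟨j, hj, hwj⟩ := hw
  exact Set.eq_empty_of_forall_notMem fun x hx => hwj ⟨x j, by simpa using hx.2 j hj⟩

lemma sdepthSet_le_sdepthSet_preimage_mapRange (gi : GaloisInsertion l u) (hu : u 0 = 0)
    (A : Set (σ →₀ ℕ)) :
    sdepthSet A ≤ sdepthSet (Finsupp.mapRange u hu ⁻¹' A) := by
  refine iSup_le fun D => ?_
  let good : Fin D.m → Prop := fun i => ∀ j ∉ D.Z i, D.u i j ∈ Set.range u
  have hpiece (i : {i // good i}) : Finsupp.mapRange u hu ⁻¹' stanleyPiece (D.u i) (D.Z i)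
      = stanleyPiece (Finsupp.mapRange l gi.gc.l_bot (D.u i)) (D.Z i) :=
    preimage_mapRange_stanleyPiece gi hu _ _ i.2
  have hcover : Finsupp.mapRange u hu ⁻¹' A
      = ⋃ i : {i // good i}, stanleyPiece (Finsupp.mapRange l gi.gc.l_bot (D.u i)) (D.Z i) := by
    simp only [← hpiece, Set.iUnion_subtype, D.cover, Set.preimage_iUnion]
    refine Set.iUnion_congr fun i => ?_
    by_cases hi : good i
    · simp only [hi, Set.iUnion_true]
    · simp only [good, not_forall, exists_prop] at hi
      simp only [preimage_mapRange_stanleyPiece_eq_empty hu _ _ hi, Set.iUnion_empty]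
  calc ⨅ i, ((D.Z i).card : ℕ∞)
      ≤ ⨅ i : {i // good i}, ((D.Z i).card : ℕ∞) := le_iInf fun i => iInf_le _ i.1
    _ ≤ sdepthSet (Finsupp.mapRange u hu ⁻¹' A) := by
      refine iInf_card_le_sdepthSet _ _ hcover fun i j hij => ?_
      dsimp only
      rw [← hpiece, ← hpiece]
      exact (D.disj _ _ (Subtype.coe_injective.ne hij)).preimage _

end StanleyDecomposition

section MonomialMembership

variable {σ R : Type*} [CommSemiring R]

theorem MvPolynomial.span_X_image_pow (s : Set σ) (n : ℕ) :
    Ideal.span (X '' s : Set (MvPolynomial σ R)) ^ n =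
      Ideal.span ((monomial · 1) '' {x : σ →₀ ℕ | x.degree = n ∧ ↑x.support ⊆ s}) := by
  rw [Ideal.span, Submodule.span_pow, Finsupp.image_pow_eq_finsuppProd_image]
  congr 2
  ext x : 1
  exact prod_X_pow_eq_monomial

lemma Finsupp.degree_eq_add_of_support_subset_pair {a b : σ} (hab : a ≠ b) {w : σ →₀ ℕ}
    (hw : ↑w.support ⊆ ({a, b} : Set σ)) : w.degree = w a + w b := by
  classical
  rw [Finsupp.degree_apply, Finset.sum_subset (s₂ := {a, b})
    (Finset.coe_subset.mp (by simpa using hw)) (fun i _ hi => Finsupp.notMem_support_iff.mp hi),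
    Finset.sum_pair hab]

lemma MvPolynomial.monomial_mem_span_pair_pow_iff [Nontrivial R] {a b : σ} (hab : a ≠ b) (n : ℕ)
    (v : σ →₀ ℕ) :
    monomial v (1 : R) ∈ Ideal.span {X a, X b} ^ n ↔ n ≤ v a + v b := by
  classical
  rw [← Set.image_pair, span_X_image_pow, mem_ideal_span_monomial_image, support_monomial,
    if_neg one_ne_zero]
  simp only [Finset.mem_singleton, forall_eq, Set.mem_ofPred_eq]
  constructor
  · rintro ⟨w, ⟨rfl, hw⟩, hwv⟩
    rw [Finsupp.degree_eq_add_of_support_subset_pair hab hw]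
    exact add_le_add (hwv a) (hwv b)
  · intro hn
    refine ⟨Finsupp.single a (min (v a) n) + Finsupp.single b (n - min (v a) n), ⟨?_, ?_⟩, ?_⟩
    · simp only [map_add, Finsupp.degree_single]
      omega
    · intro i hi
      have := Finsupp.support_add hi
      grind [Finsupp.mem_support_single]
    · intro i
      simp only [Finsupp.add_apply, Finsupp.single_apply]
      grind

end MonomialMembership

lemma mem_monomialSet_coverIdealSymbPow_iff {K V : Type*} [Field K] (G : SimpleGraph V)
    (m : ℕ) (v : V →₀ ℕ) :
    v ∈ monomialSet (coverIdealSymbPow K G m) ↔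
      ∀ e : {p : V × V // G.Adj p.1 p.2}, m ≤ v e.1.1 + v e.1.2 := by
  simp only [monomialSet, coverIdealSymbPow, Set.mem_ofPred_eq, Submodule.mem_iInf]
  exact forall_congr' fun e => monomial_mem_span_pair_pow_iff e.2.ne m v

lemma monomialSet_coverIdealSymbPow_eq_preimage {K V : Type*} [Field K] (G : SimpleGraph V)
    {k : ℕ} (hk : 1 ≤ k) :
    monomialSet (coverIdealSymbPow K G k) =
      Finsupp.mapRange (Nat.succAbove ((k + 1) / 2)) (Nat.succAbove_zero_of_pos (by omega)) ⁻¹'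
        monomialSet (coverIdealSymbPow K G (k + 1)) := by
  ext v
  simp only [Set.mem_preimage, mem_monomialSet_coverIdealSymbPow_iff, Finsupp.mapRange_apply,
    Nat.le_succAbove_add_succAbove_iff (by omega : 2 * ((k + 1) / 2) ≤ k + 1) (by omega)]

/-- For a finite simple graph `G` on `n` vertices and every
integer `k ≥ 1`, `sdepth(J(G)^(k)) ≥ sdepth(J(G)^(k+1))`: the sequence of
Stanley depths of the symbolic powers of the cover ideal is non-increasing. -/
theorem sdepth_ideal_symbPow_antitone (K : Type*) [Field K] (n : ℕ)
    (G : SimpleGraph (Fin n)) (k : ℕ) (hk : 1 ≤ k) :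
    sdepthIdeal (coverIdealSymbPow K G (k + 1)) ≤
      sdepthIdeal (coverIdealSymbPow K G k) := by
  rw [sdepthIdeal, sdepthIdeal, monomialSet_coverIdealSymbPow_eq_preimage G hk]
  exact sdepthSet_le_sdepthSet_preimage_mapRange (Nat.predAboveSuccAboveGaloisInsertion _) _ _
end

section
/- Let G be a finite simple graph on n vertices. Then the sequences {sdepth(S/J(G)^(k))}_{k=1}^∞ and {sdepth(J(G)^(k))}_{k=1}^∞ are convergent (being non-increasing sequences of non-negative integers, they are eventually constant). -/
open MvPolynomial

/-!
A monomial `x^w` lies in `J(G)^(k)` iff `w` is a `k`-cover of `G`, i.e. `k ≤ w i + w j` on every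
edge. For `2k ≤ l` the affine map `w ↦ 2w + t·𝟙`, `t = ⌈(l - 2k)/2⌉`, pulls the `l`-covers back
exactly onto the `k`-covers. A map `w ↦ c•w + v` pulls every Stanley space back to the empty set
or to a Stanley space with the same variable set, so it pulls a Stanley decomposition of a set
back to one of the preimage, of no smaller Stanley depth. Applied to the `l`-covers and to their
complement, this bounds the Stanley depth at `l` by the one at `k` whenever `2k ≤ l`; hence both
sequences are constant from `2M` on, where `M` is an index at which they are minimal.
-/

section StanleyDepth

variable {σ : Type*}

def PullsBackStanleyPieces (φ : (σ →₀ ℕ) → σ →₀ ℕ) : Prop :=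
  ∀ u Z, (φ ⁻¹' stanleyPiece u Z).Nonempty → ∃ u', φ ⁻¹' stanleyPiece u Z = stanleyPiece u' Z

lemma PullsBackStanleyPieces.comp {φ ψ : (σ →₀ ℕ) → σ →₀ ℕ} (hφ : PullsBackStanleyPieces φ)
    (hψ : PullsBackStanleyPieces ψ) : PullsBackStanleyPieces (φ ∘ ψ) := by
  rintro u Z ⟨w, hw⟩
  obtain ⟨u', hu'⟩ := hφ u Z ⟨ψ w, hw⟩
  rw [Set.preimage_comp, hu'] at hw ⊢
  exact hψ u' Z ⟨w, hw⟩

lemma pullsBackStanleyPieces_add_right (v : σ →₀ ℕ) : PullsBackStanleyPieces (· + v) := by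
  rintro u Z ⟨w₀, -, hw₀⟩
  refine ⟨u - v, Set.ext fun w =>
    and_congr tsub_le_iff_right.symm (forall₂_congr fun s hs => ?_)⟩
  have hw₀s := hw₀ s hs
  simp only [Finsupp.add_apply, Finsupp.tsub_apply] at hw₀s ⊢
  omega

lemma pullsBackStanleyPieces_smul {c : ℕ} (hc : c ≠ 0) :
    PullsBackStanleyPieces fun w : σ →₀ ℕ => c • w := by
  rintro u Z ⟨w₀, -, hw₀⟩
  refine ⟨u ⌈/⌉ c, Set.ext fun w =>
    and_congr (ceilDiv_le_iff_le_smul (Nat.pos_of_ne_zero hc)).symm (forall₂_congr fun s hs => ?_)⟩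
  rw [Finsupp.ceilDiv_apply, ← hw₀ s hs, Finsupp.smul_apply, Finsupp.smul_apply,
    smul_ceilDiv (Nat.pos_of_ne_zero hc), smul_eq_mul, smul_eq_mul, mul_right_inj' hc]

lemma le_sdepthSet_of_partition {ι : Type*} [Fintype ι] {A : Set (σ →₀ ℕ)}
    (u : ι → σ →₀ ℕ) (Z : ι → Finset σ) (hcover : A = ⋃ i, stanleyPiece (u i) (Z i))
    (hdisj : Pairwise fun i j => Disjoint (stanleyPiece (u i) (Z i)) (stanleyPiece (u j) (Z j))) :
    ⨅ i, ((Z i).card : ℕ∞) ≤ sdepthSet A := by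
  let e := (Fintype.equivFin ι).symm
  let D : StanleyDecomp A :=
    { m := Fintype.card ι
      u := u ∘ e
      Z := Z ∘ e
      cover := hcover.trans (e.iSup_comp (g := fun i => stanleyPiece (u i) (Z i))).symm
      disj := fun _ _ hij => hdisj (e.injective.ne hij) }
  calc ⨅ i, ((Z i).card : ℕ∞) = ⨅ i, ((D.Z i).card : ℕ∞) := e.iInf_comp.symm
    _ ≤ sdepthSet A := le_iSup (fun D : StanleyDecomp A => ⨅ i, ((D.Z i).card : ℕ∞)) D

lemma sdepthSet_le_sdepthSet_preimage {φ : (σ →₀ ℕ) → σ →₀ ℕ} (hφ : PullsBackStanleyPieces φ)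
    (A : Set (σ →₀ ℕ)) : sdepthSet A ≤ sdepthSet (φ ⁻¹' A) := by
  classical
  refine iSup_le fun D => ?_
  let ι := {i : Fin D.m // (φ ⁻¹' stanleyPiece (D.u i) (D.Z i)).Nonempty}
  choose u' hu' using fun i : ι => hφ _ _ i.2
  calc ⨅ i, ((D.Z i).card : ℕ∞) ≤ ⨅ i : ι, ((D.Z i).card : ℕ∞) := le_iInf fun i => iInf_le _ i.1
    _ ≤ sdepthSet (φ ⁻¹' A) := le_sdepthSet_of_partition u' (fun i => D.Z i) ?_ ?_
  · ext w
    simp only [Set.mem_iUnion, ← hu', Set.mem_preimage]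
    refine (Set.ext_iff.mp D.cover (φ w)).trans (Set.mem_iUnion.trans ⟨?_, ?_⟩)
    · rintro ⟨i, hi⟩
      exact ⟨⟨i, w, hi⟩, hi⟩
    · rintro ⟨i, hi⟩
      exact ⟨i.1, hi⟩
  · intro i j hij
    rw [← hu', ← hu']
    exact (D.disj _ _ fun h => hij (Subtype.ext h)).preimage φ

end StanleyDepth

lemma exists_forall_ge_eq_of_two_mul_le_imp_le {α : Type*} [LinearOrder α] [WellFoundedLT α]
    {F : ℕ → α} (hF : ∀ k l, 2 * k ≤ l → F l ≤ F k) : ∃ N, 1 ≤ N ∧ ∀ k, N ≤ k → F k = F N := by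
  set M := Function.argmin F
  have hconst : ∀ k, 2 * M ≤ k → F k = F M := fun k hk =>
    le_antisymm (hF M k hk) (Function.argmin_le F k)
  exact ⟨2 * M + 1, by omega, fun k hk => (hconst k (by omega)).trans (hconst _ (by omega)).symm⟩

section PairDegree

variable {σ R : Type*} [CommSemiring R]

variable (R) in
noncomputable def pairDegreeIdeal (i j : σ) (k : ℕ) : Ideal (MvPolynomial σ R) :=
  restrictSupportIdeal R {v | k ≤ v i + v j} fun _ _ hvw hv => hv.trans (add_le_add (hvw i) (hvw j))

lemma pairDegreeIdeal_mul_le (i j : σ) (k l : ℕ) :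
    pairDegreeIdeal R i j k * pairDegreeIdeal R i j l ≤ pairDegreeIdeal R i j (k + l) := by
  classical
  refine Ideal.mul_le.mpr fun p hp q hq v hv => ?_
  obtain ⟨a, ha, b, hb, rfl⟩ := Finset.mem_add.mp (support_mul p q hv)
  have hka : k ≤ a i + a j := hp ha
  have hlb : l ≤ b i + b j := hq hb
  change k + l ≤ a i + b i + (a j + b j)
  omega

lemma span_X_pair_pow_le_pairDegreeIdeal (i j : σ) (k : ℕ) :
    Ideal.span {X i, X j} ^ k ≤ pairDegreeIdeal R i j k := by
  induction k with
  | zero => exact fun _ _ _ _ => Nat.zero_le _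
  | succ k ih =>
    have hX : Ideal.span {X i, X j} ≤ pairDegreeIdeal R i j 1 := by
      rw [Ideal.span_le]
      rintro _ (rfl | rfl) <;>
        exact (monomial_mem_restrictSupport R).mpr (Or.inl (by simp))
    rw [pow_succ]
    exact (Ideal.mul_mono ih hX).trans (pairDegreeIdeal_mul_le i j k 1)

lemma monomial_mem_span_X_pair_pow_iff [Nontrivial R] {i j : σ} (hij : i ≠ j) (w : σ →₀ ℕ)
    (k : ℕ) : monomial w (1 : R) ∈ Ideal.span {X i, X j} ^ k ↔ k ≤ w i + w j := by
  refine ⟨fun h => ?_, fun h => ?_⟩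
  · simpa using (monomial_mem_restrictSupport R).mp (span_X_pair_pow_le_pairDegreeIdeal i j k h)
  · have hXX : (X i ^ w i * X j ^ w j : MvPolynomial σ R) ∈ Ideal.span {X i, X j} ^ k := by
      refine Ideal.pow_le_pow_right h ?_
      rw [pow_add]
      exact Ideal.mul_mem_mul (Ideal.pow_mem_pow (Ideal.subset_span (by simp)) _)
        (Ideal.pow_mem_pow (Ideal.subset_span (by simp)) _)
    classical
    have hle : Finsupp.single i (w i) + Finsupp.single j (w j) ≤ w := fun s => by
      simp only [Finsupp.add_apply, Finsupp.single_apply]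
      split_ifs <;> subst_vars <;> first | omega | exact absurd rfl hij
    obtain ⟨c, hc⟩ := exists_add_of_le hle
    have hmonomial : monomial (Finsupp.single i (w i) + Finsupp.single j (w j)) (1 : R) =
        X i ^ w i * X j ^ w j := by
      rw [X_pow_eq_monomial, X_pow_eq_monomial, monomial_mul, one_mul]
    rw [hc, add_comm, ← one_mul (1 : R), ← monomial_mul, hmonomial]
    exact Ideal.mul_mem_left _ _ hXX

end PairDegree

namespace SimpleGraph

variable {V : Type*} (G : SimpleGraph V)

def kCovers (k : ℕ) : Set (V →₀ ℕ) :=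
  {w | ∀ i j, G.Adj i j → k ≤ w i + w j}

lemma monomialSet_coverIdealSymbPow (K : Type*) [Field K] (k : ℕ) :
    monomialSet (coverIdealSymbPow K G k) = G.kCovers k := by
  ext w
  simp only [monomialSet, coverIdealSymbPow, Ideal.mem_iInf, Subtype.forall]
  exact ⟨fun h i j hij =>
      (monomial_mem_span_X_pair_pow_iff (G.ne_of_adj hij) w k).mp (h (i, j) hij),
    fun h p hp => (monomial_mem_span_X_pair_pow_iff (G.ne_of_adj hp) w k).mpr (h p.1 p.2 hp)⟩

lemma exists_pullsBackStanleyPieces_preimage_kCovers [Finite V] {k l : ℕ} (hkl : 2 * k ≤ l) :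
    ∃ φ : (V →₀ ℕ) → V →₀ ℕ, PullsBackStanleyPieces φ ∧ φ ⁻¹' G.kCovers l = G.kCovers k := by
  set t := (l - 2 * k + 1) / 2 with ht
  refine ⟨(· + Finsupp.equivFunOnFinite.symm fun _ => t) ∘ (2 • ·),
    (pullsBackStanleyPieces_add_right _).comp (pullsBackStanleyPieces_smul two_ne_zero), ?_⟩
  ext w
  refine forall₂_congr fun i j => imp_congr_right fun _ => ?_
  simp only [Function.comp_apply, Finsupp.add_apply, Finsupp.smul_apply, smul_eq_mul,
    Finsupp.coe_equivFunOnFinite_symm]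
  omega

variable [Finite V] {k l : ℕ}

lemma sdepthIdeal_coverIdealSymbPow_le (K : Type*) [Field K] (hkl : 2 * k ≤ l) :
    sdepthIdeal (coverIdealSymbPow K G l) ≤ sdepthIdeal (coverIdealSymbPow K G k) := by
  obtain ⟨φ, hφ, hpre⟩ := G.exists_pullsBackStanleyPieces_preimage_kCovers hkl
  simpa only [sdepthIdeal, monomialSet_coverIdealSymbPow, hpre] using
    sdepthSet_le_sdepthSet_preimage hφ (G.kCovers l)

lemma sdepthQuot_coverIdealSymbPow_le (K : Type*) [Field K] (hkl : 2 * k ≤ l) :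
    sdepthQuot (coverIdealSymbPow K G l) ≤ sdepthQuot (coverIdealSymbPow K G k) := by
  obtain ⟨φ, hφ, hpre⟩ := G.exists_pullsBackStanleyPieces_preimage_kCovers hkl
  simpa only [sdepthQuot, monomialSet_coverIdealSymbPow, Set.preimage_compl, hpre] using
    sdepthSet_le_sdepthSet_preimage hφ (G.kCovers l)ᶜ

end SimpleGraph

/-- For a finite simple graph `G` on `n` vertices, the sequences
`{sdepth(S/J(G)^(k))}_{k≥1}` and `{sdepth(J(G)^(k))}_{k≥1}` are convergent,
i.e. eventually constant. -/
theorem sdepth_symbPow_eventually_constant (K : Type*) [Field K] (n : ℕ)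
    (G : SimpleGraph (Fin n)) :
    (∃ N : ℕ, 1 ≤ N ∧ ∀ k : ℕ, N ≤ k →
      sdepthQuot (coverIdealSymbPow K G k) = sdepthQuot (coverIdealSymbPow K G N)) ∧
    (∃ N : ℕ, 1 ≤ N ∧ ∀ k : ℕ, N ≤ k →
      sdepthIdeal (coverIdealSymbPow K G k) = sdepthIdeal (coverIdealSymbPow K G N)) :=
  ⟨exists_forall_ge_eq_of_two_mul_le_imp_le fun _ _ => G.sdepthQuot_coverIdealSymbPow_le K,
    exists_forall_ge_eq_of_two_mul_le_imp_le fun _ _ => G.sdepthIdeal_coverIdealSymbPow_le K⟩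
end

section
/- Let G be a finite simple graph with vertex set {x_1,...,x_n} and let k ≥ 1 be an integer. Set W = {x_{i, ⌊(k+1)/2⌋ + 1} : 1 ≤ i ≤ n} ⊆ V(G_{k+1}). Then the map φ: V(G_k) → V(G_{k+1} \ W) defined by φ(x_{i,j}) = x_{i,j} if 1 ≤ j ≤ ⌊(k+1)/2⌋ and φ(x_{i,j}) = x_{i,j+1} if j ≥ ⌊(k+1)/2⌋ + 1 is a graph isomorphism between G_k and the induced subgraph of G_{k+1} on V(G_{k+1}) \ W; in particular, G_k is isomorphic to an induced subgraph of G_{k+1}. -/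
/-- The zero-based index of the layer of `G_{k+1}` that is deleted. -/
def midLayer (k : ℕ) : Fin (k + 1) := ⟨(k + 1) / 2, by omega⟩

lemma val_succAbove_midLayer {k : ℕ} (j : Fin k) :
    ((midLayer k).succAbove j).val = if j.val < (k + 1) / 2 then j.val else j.val + 1 := by
  unfold Fin.succAbove
  split_ifs <;> simp_all [Fin.lt_def, midLayer]

lemma layer_sum_le_iff_succAbove_midLayer {k : ℕ} (p q : Fin k) :
    p.val + 1 + (q.val + 1) ≤ k + 1 ↔
      ((midLayer k).succAbove p).val + 1 + (((midLayer k).succAbove q).val + 1) ≤ k + 1 + 1 := by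
  rw [val_succAbove_midLayer, val_succAbove_midLayer]
  split_ifs <;> omega

def graphPowerSuccEmbedding {n : ℕ} (G : SimpleGraph (Fin n)) (k : ℕ) :
    graphPower G k ↪g graphPower G (k + 1) where
  toFun := Prod.map id (midLayer k).succAbove
  inj' := Function.injective_id.prodMap Fin.succAbove_right_injective
  map_rel_iff' {v w} := and_congr_right' (layer_sum_le_iff_succAbove_midLayer v.2 w.2).symm

lemma range_graphPowerSuccEmbedding {n : ℕ} (G : SimpleGraph (Fin n)) (k : ℕ) :
    Set.range (graphPowerSuccEmbedding G k) = {w | w.2.val ≠ (k + 1) / 2} := by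
  ext w
  simp [graphPowerSuccEmbedding, Set.range_prodMap, Fin.ext_iff, midLayer]

/-- Let `G` be a graph with vertex set `{x_1,…,x_n}` and
`k ≥ 1`. Let `W = {x_{i,⌊(k+1)/2⌋+1} : 1 ≤ i ≤ n} ⊆ V(G_{k+1})` (zero-based:
the vertices whose second coordinate is `⌊(k+1)/2⌋`). The map
`φ : V(G_k) → V(G_{k+1})` sending `x_{i,j}` to `x_{i,j}` for `j ≤ ⌊(k+1)/2⌋`
and to `x_{i,j+1}` for `j ≥ ⌊(k+1)/2⌋ + 1` is injective with range
`V(G_{k+1}) \ W`, and preserves and reflects adjacency; that is, `φ` is a graph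
isomorphism from `G_k` onto the induced subgraph of `G_{k+1}` on
`V(G_{k+1}) \ W`. In particular `G_k` is isomorphic to an induced subgraph of
`G_{k+1}`. -/
theorem graphPower_induced_subgraph (n k : ℕ) (G : SimpleGraph (Fin n)) :
    Function.Injective
      (fun v : Fin n × Fin k =>
        ((v.1, if v.2.val + 1 ≤ (k + 1) / 2 then (⟨v.2.val, by omega⟩ : Fin (k + 1))
          else ⟨v.2.val + 1, by omega⟩) : Fin n × Fin (k + 1))) ∧
    Set.range
      (fun v : Fin n × Fin k =>
        ((v.1, if v.2.val + 1 ≤ (k + 1) / 2 then (⟨v.2.val, by omega⟩ : Fin (k + 1))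
          else ⟨v.2.val + 1, by omega⟩) : Fin n × Fin (k + 1))) =
      {w : Fin n × Fin (k + 1) | w.2.val ≠ (k + 1) / 2} ∧
    ∀ v w : Fin n × Fin k,
      (graphPower G k).Adj v w ↔
        (graphPower G (k + 1)).Adj
          (v.1, if v.2.val + 1 ≤ (k + 1) / 2 then (⟨v.2.val, by omega⟩ : Fin (k + 1))
            else ⟨v.2.val + 1, by omega⟩)
          (w.1, if w.2.val + 1 ≤ (k + 1) / 2 then (⟨w.2.val, by omega⟩ : Fin (k + 1))
            else ⟨w.2.val + 1, by omega⟩) := by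
  -- The map of the statement is `Prod.map id (midLayer k).succAbove` unfolded.
  change Function.Injective (graphPowerSuccEmbedding G k) ∧
    Set.range (graphPowerSuccEmbedding G k) = _ ∧
    ∀ v w, (graphPower G k).Adj v w ↔
      (graphPower G (k + 1)).Adj (graphPowerSuccEmbedding G k v) (graphPowerSuccEmbedding G k w)
  exact ⟨(graphPowerSuccEmbedding G k).injective, range_graphPowerSuccEmbedding G k,
    fun _ _ => (graphPowerSuccEmbedding G k).map_adj_iff.symm⟩
end

section
/- Let I be a monomial ideal of S = K[x_1,...,x_n], let x_j be a variable, let S' be the polynomial ring in the variables other than x_j, and set I₀ = I ∩ S' and I₁ = (I : x_j). Then sdepth_S(I) ≥ min{sdepth_{S'}(I₀), sdepth_S(I₁)} and sdepth_S(S/I) ≥ min{sdepth_{S'}(S'/I₀), sdepth_S(S/I₁)}. (These follow from the vector-space decompositions I = I₀ ⊕ x_j I₁ and S/I = (S'/I₀) ⊕ x_j (S/I₁).) -/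
open MvPolynomial

namespace StanleyDecomp

variable {σ τ : Type*} {A B : Set (σ →₀ ℕ)}

lemma le_sdepthSet (D : StanleyDecomp A) : ⨅ i, ((D.Z i).card : ℕ∞) ≤ sdepthSet A :=
  le_iSup (fun D : StanleyDecomp A => ⨅ i, ((D.Z i).card : ℕ∞)) D

lemma piece_subset (D : StanleyDecomp A) (i : Fin D.m) : stanleyPiece (D.u i) (D.Z i) ⊆ A :=
  (Set.subset_iUnion (fun i => stanleyPiece (D.u i) (D.Z i)) i).trans D.cover.symm.subset

def image {A : Set (τ →₀ ℕ)} (D : StanleyDecomp A) (f : (τ →₀ ℕ) → (σ →₀ ℕ))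
    (g : Finset τ → Finset σ) (hf : f.Injective)
    (hpiece : ∀ u Z, stanleyPiece (f u) (g Z) = f '' stanleyPiece u Z) :
    StanleyDecomp (f '' A) where
  m := D.m
  u := f ∘ D.u
  Z := g ∘ D.Z
  cover := by simp only [Function.comp_apply, hpiece, D.cover, Set.image_iUnion]
  disj i k hik := by
    simpa only [Function.comp_apply, hpiece, Set.disjoint_image_iff hf] using D.disj i k hik

def union (D : StanleyDecomp A) (D' : StanleyDecomp B) (h : Disjoint A B) :
    StanleyDecomp (A ∪ B) where
  m := D.m + D'.m
  u := Fin.append D.u D'.u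
  Z := Fin.append D.Z D'.Z
  cover := by
    refine (congrArg₂ (· ∪ ·) D.cover D'.cover).trans ?_
    rw [← finSumFinEquiv.surjective.iUnion_comp, Set.iUnion_sum]
    simp only [finSumFinEquiv_apply_left, finSumFinEquiv_apply_right, Fin.append_left,
      Fin.append_right]
  disj i k hik := by
    induction i using Fin.addCases <;> induction k using Fin.addCases <;>
      simp only [Fin.append_left, Fin.append_right] at hik ⊢
    · exact D.disj _ _ fun h => hik (congrArg _ h)
    · exact h.mono (D.piece_subset _) (D'.piece_subset _)
    · exact h.symm.mono (D'.piece_subset _) (D.piece_subset _)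
    · exact D'.disj _ _ fun h => hik (congrArg _ h)

end StanleyDecomp

section sdepthSet

variable {σ τ : Type*}

lemma sdepthSet_le_sdepthSet_image {A : Set (τ →₀ ℕ)} (f : (τ →₀ ℕ) → (σ →₀ ℕ))
    (g : Finset τ → Finset σ) (hf : f.Injective)
    (hpiece : ∀ u Z, stanleyPiece (f u) (g Z) = f '' stanleyPiece u Z)
    (hg : ∀ Z, Z.card ≤ (g Z).card) :
    sdepthSet A ≤ sdepthSet (f '' A) :=
  iSup_le fun D => (iInf_mono fun i => by exact_mod_cast hg (D.Z i)).trans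
    (D.image f g hf hpiece).le_sdepthSet

lemma min_sdepthSet_le_sdepthSet_union {A B : Set (σ →₀ ℕ)} (h : Disjoint A B) :
    min (sdepthSet A) (sdepthSet B) ≤ sdepthSet (A ∪ B) := by
  rw [sdepthSet, sdepthSet, iSup_inf_eq]
  refine iSup_le fun D => ?_
  rw [inf_iSup_eq]
  refine iSup_le fun D' => le_trans ?_ (D.union D' h).le_sdepthSet
  refine le_iInf fun i => ?_
  induction i using Fin.addCases with
  | left a => exact inf_le_left.trans (iInf_le_of_le a (by simp [StanleyDecomp.union]))
  | right b => exact inf_le_right.trans (iInf_le_of_le b (by simp [StanleyDecomp.union]))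

end sdepthSet

namespace Finsupp

variable {σ τ : Type*}

lemma stanleyPiece_embDomain (e : τ ↪ σ) (u : τ →₀ ℕ) (Z : Finset τ) :
    stanleyPiece (embDomain e u) (Z.map e) = embDomain e '' stanleyPiece u Z := by
  ext v
  constructor
  · rintro ⟨hle, hfix⟩
    obtain ⟨w, rfl⟩ : v ∈ Set.range (embDomain e) := by
      refine (mem_range_embDomain_iff e v).2 fun i hi => ?_
      by_contra hrange
      have hZ : i ∉ Z.map e := fun hi' => hrange (Finset.mem_map.1 hi' |>.imp fun _ h => h.2)
      exact (mem_support_iff.1 hi) (by rw [hfix i hZ, embDomain_of_notMem_range _ _ _ hrange])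
    refine ⟨w, ⟨(embDomain_le_embDomain_iff_le e u w).1 hle, fun a ha => ?_⟩, rfl⟩
    simpa only [embDomain_apply_self] using hfix (e a) (by simpa using ha)
  · rintro ⟨w, ⟨hle, hfix⟩, rfl⟩
    refine ⟨(embDomain_le_embDomain_iff_le e u w).2 hle, fun i hi => ?_⟩
    by_cases hrange : i ∈ Set.range e
    · obtain ⟨a, rfl⟩ := hrange
      simpa only [embDomain_apply_self] using hfix a (by simpa using hi)
    · simp only [embDomain_of_notMem_range _ _ _ hrange]

lemma stanleyPiece_add (c u : σ →₀ ℕ) (Z : Finset σ) :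
    stanleyPiece (c + u) Z = (c + ·) '' stanleyPiece u Z := by
  ext v
  constructor
  · rintro ⟨hle, hfix⟩
    have hc : c ≤ v := le_self_add.trans hle
    refine ⟨v - c, ⟨le_tsub_of_add_le_left hle, fun i hi => ?_⟩, add_tsub_cancel_of_le hc⟩
    simp [hfix i hi]
  · rintro ⟨w, ⟨hle, hfix⟩, rfl⟩
    exact ⟨add_le_add_right hle c, fun i hi => by simp [hfix i hi]⟩

lemma range_embDomain_subtype_ne (j : σ) :
    Set.range (embDomain (M := ℕ) (Function.Embedding.subtype (· ≠ j))) = {v | v j = 0} := by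
  ext v
  rw [mem_range_embDomain_iff, Function.Embedding.coe_subtype, Subtype.range_coe_subtype]
  constructor
  · intro h
    by_contra hj
    exact h (mem_support_iff.2 hj) rfl
  · intro hj i hi hij
    subst hij
    exact mem_support_iff.1 hi hj

lemma range_single_one_add (j : σ) :
    Set.range (single j 1 + · : (σ →₀ ℕ) → σ →₀ ℕ) = {v | v j ≠ 0} := by
  ext v
  constructor
  · rintro ⟨w, rfl⟩
    simp
  · intro hj
    exact ⟨v - single j 1, add_tsub_cancel_of_le (single_le_iff.2 (Nat.one_le_iff_ne_zero.2 hj))⟩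

end Finsupp

open Finsupp in
lemma min_sdepthSet_preimage_le_sdepthSet {σ : Type*} (A : Set (σ →₀ ℕ)) (j : σ) :
    min (sdepthSet (embDomain (Function.Embedding.subtype (· ≠ j)) ⁻¹' A))
        (sdepthSet ((single j 1 + ·) ⁻¹' A)) ≤ sdepthSet A := by
  set ι := embDomain (M := ℕ) (Function.Embedding.subtype (· ≠ j))
  set s : (σ →₀ ℕ) → σ →₀ ℕ := (single j 1 + ·)
  have hι : Set.range ι = {v | v j = 0} := range_embDomain_subtype_ne j
  have hs : Set.range s = {v | v j ≠ 0} := range_single_one_add j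
  have hsplit : ι '' (ι ⁻¹' A) ∪ s '' (s ⁻¹' A) = A := by
    rw [Set.image_preimage_eq_inter_range, Set.image_preimage_eq_inter_range, hι, hs,
      ← Set.inter_union_distrib_left]
    exact Set.inter_eq_left.2 fun v _ => em (v j = 0)
  have hdisj : Disjoint (ι '' (ι ⁻¹' A)) (s '' (s ⁻¹' A)) := by
    refine Disjoint.mono (Set.image_subset_range _ _) (Set.image_subset_range _ _) ?_
    rw [hι, hs]
    exact Set.disjoint_left.2 fun v h0 hne => hne h0
  calc min (sdepthSet (ι ⁻¹' A)) (sdepthSet (s ⁻¹' A))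
      ≤ min (sdepthSet (ι '' (ι ⁻¹' A))) (sdepthSet (s '' (s ⁻¹' A))) :=
        min_le_min
          (sdepthSet_le_sdepthSet_image ι _ (embDomain_injective _)
            (stanleyPiece_embDomain _) fun _ => (Finset.card_map _).ge)
          (sdepthSet_le_sdepthSet_image s id (add_right_injective _)
            (stanleyPiece_add _) fun _ => le_rfl)
    _ ≤ sdepthSet A := (min_sdepthSet_le_sdepthSet_union hdisj).trans_eq (by rw [hsplit])

section monomialSet

variable {σ τ K : Type*} [CommSemiring K]

lemma monomialSet_comap_rename (e : τ ↪ σ) (I : Ideal (MvPolynomial σ K)) :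
    monomialSet (I.comap (rename e)) = Finsupp.embDomain e ⁻¹' monomialSet I := by
  ext v
  simp only [monomialSet, Set.mem_ofPred_eq, Set.mem_preimage, Ideal.mem_comap, rename_monomial,
    Finsupp.embDomain_eq_mapDomain]

lemma monomialSet_colon_monomial (I : Ideal (MvPolynomial σ K)) (c : σ →₀ ℕ) :
    monomialSet (I.colon (Ideal.span {monomial c (1 : K)})) = (c + ·) ⁻¹' monomialSet I := by
  ext v
  simp only [monomialSet, Set.mem_ofPred_eq, Set.mem_preimage, Ideal.mem_colon_span_singleton,
    monomial_mul, mul_one, add_comm v c]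

end monomialSet

theorem sdepth_split_along_variable_general (K : Type*) [Field K] (n : ℕ) (j : Fin n)
    (I : Ideal (MvPolynomial (Fin n) K)) :
    min (sdepthIdeal (restrictIdeal K j I))
        (sdepthIdeal (Submodule.colon I (Ideal.span {(X j : MvPolynomial (Fin n) K)}))) ≤
      sdepthIdeal I ∧
    min (sdepthQuot (restrictIdeal K j I))
        (sdepthQuot (Submodule.colon I (Ideal.span {(X j : MvPolynomial (Fin n) K)}))) ≤
      sdepthQuot I := by
  have h₀ : monomialSet (restrictIdeal K j I) =
      Finsupp.embDomain (Function.Embedding.subtype (· ≠ j)) ⁻¹' monomialSet I :=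
    monomialSet_comap_rename (Function.Embedding.subtype _) I
  have h₁ : monomialSet (I.colon (Ideal.span {(X j : MvPolynomial (Fin n) K)})) =
      (Finsupp.single j 1 + ·) ⁻¹' monomialSet I :=
    monomialSet_colon_monomial I (Finsupp.single j 1)
  simp only [sdepthIdeal, sdepthQuot, h₀, h₁, ← Set.preimage_compl]
  exact ⟨min_sdepthSet_preimage_le_sdepthSet _ j, min_sdepthSet_preimage_le_sdepthSet _ j⟩

/-- Let `I` be a monomial ideal of `S = K[x_1,…,x_n]`, let
`S'` be the polynomial ring in the variables other than `x_j`, and set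
`I₀ = I ∩ S'` and `I₁ = (I : x_j)`. Then
`sdepth_S(I) ≥ min{sdepth_{S'}(I₀), sdepth_S(I₁)}` and
`sdepth_S(S/I) ≥ min{sdepth_{S'}(S'/I₀), sdepth_S(S/I₁)}`. -/
theorem sdepth_split_along_variable (K : Type*) [Field K] (n : ℕ) (j : Fin n)
    (I : Ideal (MvPolynomial (Fin n) K)) (hI : I.IsMonomialIdeal) :
    min (sdepthIdeal (restrictIdeal K j I))
        (sdepthIdeal (Submodule.colon I (Ideal.span {(X j : MvPolynomial (Fin n) K)}))) ≤
      sdepthIdeal I ∧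
    min (sdepthQuot (restrictIdeal K j I))
        (sdepthQuot (Submodule.colon I (Ideal.span {(X j : MvPolynomial (Fin n) K)}))) ≤
      sdepthQuot I :=
  sdepth_split_along_variable_general K n j I
end
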